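/- Assume κ ∈ C^{3r}(Ω), ∂κ/∂u ∈ C^{3r}(Ω), ∂²κ/∂u² is continuous on Ω, and f ∈ C^{3r}[a,b]. Let δ₀ > 0, let φ : [a,b] → ℝ be bounded, and let c₀ > 0. Fix an integer p ≥ 1 and set m = n·p. Then there exists a constant C, independent of n and m, such that for every n ≥ 1, every solution φ_m ∈ B(φ,δ₀) of x − K_m(x) = f satisfying ‖Q_n φ_m − φ_m‖_∞ ≤ min{δ₀, c₀·h^r}, and every bounded function v : [a,b] → ℝ: ‖K_m'(φ_m)(((K̃_n^M)'(φ_m) − K_m'(φ_m))v)‖_∞ ≤ C · h^r · ‖v‖_∞. Consequently, for any bounded z with ‖z − φ_m‖_∞ ≤ c₁·max{h̃^d, h^{3r}}: ‖K_m'(φ_m)(((K̃_n^M)'(φ_m) − K_m'(φ_m))(z − φ_m))‖_∞ ≤ C·c₁ · h^r · max{h̃^d, h^{3r}}. -/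

import Mathlib

/-!
The difference `(K̃ₙᴹ)'(φₘ)v - Kₘ'(φₘ)v` splits as
`(Qₙ - I) Kₘ'(φₘ) v - (Qₙ - I) Kₘ'(Qₙφₘ) (Qₙ v)`.
Both `Kₘ'(φₘ) v` and `Kₘ'(Qₙφₘ)(Qₙ v)` are finite sums of slices `s ↦ ∂κ/∂u (s, ζ, u)`, so their
`r`-th derivatives are bounded by `(b - a) W sup |∂ₛʳ ∂κ/∂u| ‖v‖`, the supremum being taken over a
fixed compact box: `φₘ` and `Qₙφₘ` stay within `2δ₀` of the bounded function `φ`. On each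
subinterval `Qₙ` reproduces polynomials of degree `< r` and is bounded by a Lebesgue constant
independent of `h`, so Taylor's theorem makes both interpolation errors `O(hʳ ‖v‖)`.
Applying `Kₘ'(φₘ)`, which is bounded by `(b - a) W sup |∂κ/∂u|`, keeps the bound. The second
estimate is the first one with `v = z - φₘ`.
-/

open Set

noncomputable section

/-- Supremum of `|x|` over `[a, b]`. -/
def supIcc (a b : ℝ) (x : ℝ → ℝ) : ℝ := ⨆ t : Set.Icc a b, |x t.1|

/-- `x` is bounded on `[a, b]`. -/
def BddIcc (a b : ℝ) (x : ℝ → ℝ) : Prop := ∃ M, ∀ t ∈ Set.Icc a b, |x t| ≤ M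

/-- The quadrature rule `(w, μ)` on `[0,1]` has degree of precision at least `k`:
it integrates exactly all polynomials of degree at most `k`. -/
def Precision {ρ : ℕ} (w μ : Fin ρ → ℝ) (k : ℕ) : Prop :=
  ∀ P : Polynomial ℝ, P.natDegree ≤ k →
    ∑ i, w i * P.eval (μ i) = ∫ t in (0:ℝ)..1, P.eval t

/-- `Ψ(t) = ∏ i (t - q i)`. -/
def Psi {r : ℕ} (q : Fin r → ℝ) (t : ℝ) : ℝ := ∏ i, (t - q i)

/-- `q` lists the Gauss points of order `r` in `(0,1)`. -/
def GaussPts {r : ℕ} (q : Fin r → ℝ) : Prop :=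
  StrictMono q ∧ (∀ i, q i ∈ Set.Ioo (0:ℝ) 1) ∧
    ∀ j, j < r → ∫ t in (0:ℝ)..1, t ^ j * Psi q t = 0

/-- Quadrature nodes `ζ_i^{j+1}` of the composite rule, `j = 0, …, m-1`. -/
def qNode {ρ : ℕ} (a b : ℝ) (μ : Fin ρ → ℝ) (m j : ℕ) (i : Fin ρ) : ℝ :=
  a + (j : ℝ) * ((b - a) / m) + μ i * ((b - a) / m)

/-- Nyström operator, linear kernel. -/
def nystL {ρ : ℕ} (a b : ℝ) (w μ : Fin ρ → ℝ) (m : ℕ) (κ : ℝ → ℝ → ℝ) (x : ℝ → ℝ) :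
    ℝ → ℝ := fun s =>
  ((b - a) / m) *
    ∑ j ∈ Finset.range m, ∑ i, w i * κ s (qNode a b μ m j i) * x (qNode a b μ m j i)

/-- Nyström operator, Urysohn kernel. -/
def nystU {ρ : ℕ} (a b : ℝ) (w μ : Fin ρ → ℝ) (m : ℕ) (κ : ℝ → ℝ → ℝ → ℝ) (x : ℝ → ℝ) :
    ℝ → ℝ := fun s =>
  ((b - a) / m) *
    ∑ j ∈ Finset.range m, ∑ i, w i * κ s (qNode a b μ m j i) (x (qNode a b μ m j i))

/-- Fréchet derivative `K_m'(x) v` of the Nyström operator. -/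
def nystU' {ρ : ℕ} (a b : ℝ) (w μ : Fin ρ → ℝ) (m : ℕ) (κ : ℝ → ℝ → ℝ → ℝ) (x v : ℝ → ℝ) :
    ℝ → ℝ := fun s =>
  ((b - a) / m) *
    ∑ j ∈ Finset.range m, ∑ i,
      w i * deriv (κ s (qNode a b μ m j i)) (x (qNode a b μ m j i)) * v (qNode a b μ m j i)

/-- Collocation nodes `τ_i^{k+1}`, `k = 0, …, n-1`. -/
def cNode {r : ℕ} (a b : ℝ) (q : Fin r → ℝ) (n k : ℕ) (i : Fin r) : ℝ :=
  a + (k : ℝ) * ((b - a) / n) + q i * ((b - a) / n)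

/-- Index of the subinterval of the uniform partition of `[a,b]` containing `t`. -/
def iIdx (a b : ℝ) (n : ℕ) (t : ℝ) : ℕ :=
  min (n - 1) (⌊(t - a) / ((b - a) / n)⌋.toNat)

/-- Piecewise-polynomial interpolatory projection at the `r` Gauss points of each
subinterval of the uniform partition of `[a,b]` into `n` parts. -/
def projQ {r : ℕ} (a b : ℝ) (q : Fin r → ℝ) (n : ℕ) (x : ℝ → ℝ) : ℝ → ℝ := fun t =>
  (Lagrange.interpolate Finset.univ (cNode a b q n (iIdx a b n t))
    fun i => x (cNode a b q n (iIdx a b n t) i)).eval t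

/-- Discrete modified projection operator, linear case. -/
def modL {ρ r : ℕ} (a b : ℝ) (w μ : Fin ρ → ℝ) (q : Fin r → ℝ) (n m : ℕ)
    (κ : ℝ → ℝ → ℝ) (x : ℝ → ℝ) : ℝ → ℝ :=
  projQ a b q n (nystL a b w μ m κ x) + nystL a b w μ m κ (projQ a b q n x)
    - projQ a b q n (nystL a b w μ m κ (projQ a b q n x))

/-- Discrete modified projection operator, Urysohn case. -/
def modU {ρ r : ℕ} (a b : ℝ) (w μ : Fin ρ → ℝ) (q : Fin r → ℝ) (n m : ℕ)
    (κ : ℝ → ℝ → ℝ → ℝ) (x : ℝ → ℝ) : ℝ → ℝ :=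
  projQ a b q n (nystU a b w μ m κ x) + nystU a b w μ m κ (projQ a b q n x)
    - projQ a b q n (nystU a b w μ m κ (projQ a b q n x))

/-- Fréchet derivative of `modU` at `x`, applied to `v`. -/
def modU' {ρ r : ℕ} (a b : ℝ) (w μ : Fin ρ → ℝ) (q : Fin r → ℝ) (n m : ℕ)
    (κ : ℝ → ℝ → ℝ → ℝ) (x v : ℝ → ℝ) : ℝ → ℝ :=
  projQ a b q n (nystU' a b w μ m κ x v)
    + nystU' a b w μ m κ (projQ a b q n x) (projQ a b q n v)
    - projQ a b q n (nystU' a b w μ m κ (projQ a b q n x) (projQ a b q n v))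

/-- `‖x‖_{k,∞}`. -/
def CkNorm (a b : ℝ) (k : ℕ) (x : ℝ → ℝ) : ℝ :=
  ⨆ p : Fin (k + 1) × Set.Icc a b, |iteratedDeriv (p.1 : ℕ) x p.2.1|

/-- Mixed partial derivative `∂^{i+j} κ / ∂s^i ∂t^j`. -/
def pder (i j : ℕ) (κ : ℝ → ℝ → ℝ) (s t : ℝ) : ℝ :=
  iteratedDeriv i (fun s' => iteratedDeriv j (κ s') t) s

/-- `‖κ‖_{k,∞}`. -/
def kerNorm (a b : ℝ) (k : ℕ) (κ : ℝ → ℝ → ℝ) : ℝ :=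
  ⨆ p : {ij : ℕ × ℕ // ij.1 + ij.2 ≤ k} × (Set.Icc a b × Set.Icc a b),
    |pder p.1.1.1 p.1.1.2 κ p.2.1.1 p.2.2.1|

/-- `W = ∑ |w i|`. -/
def Wsum {ρ : ℕ} (w : Fin ρ → ℝ) : ℝ := ∑ i, |w i|

/-- `∂κ/∂u`, Urysohn kernel. -/
def du (κ : ℝ → ℝ → ℝ → ℝ) (s t u : ℝ) : ℝ := deriv (κ s t) u

/-- `∂²κ/∂u²`, Urysohn kernel. -/
def du2 (κ : ℝ → ℝ → ℝ → ℝ) (s t u : ℝ) : ℝ := deriv (deriv (κ s t)) u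

/-- supremum of `|g(s,t,u)|` over `s, t ∈ [a,b]`, `|u| ≤ B`. -/
def supU (a b B : ℝ) (g : ℝ → ℝ → ℝ → ℝ) : ℝ :=
  ⨆ v : Set.Icc a b × Set.Icc a b × Set.Icc (-B) B, |g v.1.1 v.2.1.1 v.2.2.1|

/-- `∂κ/∂u` exists everywhere and is continuous. -/
def Smooth1 (κ : ℝ → ℝ → ℝ → ℝ) : Prop :=
  (∀ s t : ℝ, Differentiable ℝ (κ s t)) ∧
    Continuous fun v : ℝ × ℝ × ℝ => du κ v.1 v.2.1 v.2.2

/-- `∂²κ/∂u²` exists everywhere and is continuous. -/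
def Smooth2 (κ : ℝ → ℝ → ℝ → ℝ) : Prop :=
  (∀ s t : ℝ, Differentiable ℝ (deriv (κ s t))) ∧
    Continuous fun v : ℝ × ℝ × ℝ => du2 κ v.1 v.2.1 v.2.2

section Slices

variable {F : Type*} [NormedAddCommGroup F] [NormedSpace ℝ F]

lemma abs_iteratedDeriv_slice_le {G : ℝ × F → ℝ} {k : ℕ} (hG : ContDiff ℝ k G) (s : ℝ) (y : F) :
    |iteratedDeriv k (fun s' => G (s', y)) s| ≤ ‖iteratedFDeriv ℝ k G (s, y)‖ := by
  have hslice : (fun s' => G (s', y)) =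
      (fun z => G (z + (0, y))) ∘ ContinuousLinearMap.inl ℝ ℝ F := by
    funext s'; simp
  have hG' : ContDiff ℝ k fun z => G (z + (0, y)) := hG.comp (contDiff_id.add contDiff_const)
  rw [← Real.norm_eq_abs, ← norm_iteratedFDeriv_eq_norm_iteratedDeriv, hslice,
    ContinuousLinearMap.iteratedFDeriv_comp_right _ hG' _ le_rfl, iteratedFDeriv_comp_add_right]
  refine (ContinuousMultilinearMap.norm_compContinuousLinearMap_le _ _).trans ?_
  have hinl : ∏ _i : Fin k, ‖ContinuousLinearMap.inl ℝ ℝ F‖ ≤ 1 :=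
    Finset.prod_le_one (fun _ _ => norm_nonneg _) fun _ _ => ContinuousLinearMap.norm_inl_le_one ..
  simpa using mul_le_of_le_one_right (norm_nonneg _) hinl

lemma exists_bound_iteratedDeriv_slice {G : ℝ × F → ℝ} {k : ℕ} (hG : ContDiff ℝ k G)
    {K : Set (ℝ × F)} (hK : IsCompact K) :
    ∃ M, 0 ≤ M ∧ ∀ z ∈ K, |iteratedDeriv k (fun s => G (s, z.2)) z.1| ≤ M := by
  obtain ⟨M, hM⟩ := hK.exists_bound_of_continuousOn
    (hG.continuous_iteratedFDeriv le_rfl).norm.continuousOn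
  exact ⟨max M 0, le_max_right _ _, fun z hz =>
    ((abs_iteratedDeriv_slice_le hG z.1 z.2).trans ((le_abs_self _).trans (hM z hz))).trans
      (le_max_left _ _)⟩

end Slices

section Quadrature

variable {ρ : ℕ} {a b : ℝ}

lemma qNode_mem_Icc (hab : a ≤ b) {μ : Fin ρ → ℝ} (hμ : ∀ i, μ i ∈ Icc (0 : ℝ) 1) {m j : ℕ}
    (hj : j < m) (i : Fin ρ) : qNode a b μ m j i ∈ Icc a b := by
  have hm : (0 : ℝ) < m := by exact_mod_cast (Nat.zero_le j).trans_lt hj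
  have hjm : (j : ℝ) + 1 ≤ m := by exact_mod_cast hj
  have hh : 0 ≤ (b - a) / m := div_nonneg (sub_nonneg.mpr hab) hm.le
  have hmh : (m : ℝ) * ((b - a) / m) = b - a := mul_div_cancel₀ _ hm.ne'
  obtain ⟨hμ0, hμ1⟩ := hμ i
  constructor <;> simp only [qNode] <;> nlinarith

lemma Wsum_nonneg (w : Fin ρ → ℝ) : 0 ≤ Wsum w :=
  Finset.sum_nonneg fun _ _ => abs_nonneg _

lemma abs_composite_sum_le (hab : a ≤ b) (w : Fin ρ → ℝ) (m : ℕ) (g : ℕ → Fin ρ → ℝ)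
    {M : ℝ} (hM : 0 ≤ M) (hg : ∀ j < m, ∀ i, |g j i| ≤ M) :
    |(b - a) / m * ∑ j ∈ Finset.range m, ∑ i, w i * g j i| ≤ (b - a) * Wsum w * M := by
  have hinner : ∀ j ∈ Finset.range m, |∑ i, w i * g j i| ≤ Wsum w * M := fun j hj => by
    rw [Wsum, Finset.sum_mul]
    refine (Finset.abs_sum_le_sum_abs _ _).trans (Finset.sum_le_sum fun i _ => ?_)
    rw [abs_mul]
    exact mul_le_mul_of_nonneg_left (hg j (Finset.mem_range.mp hj) i) (abs_nonneg _)
  have hWM : 0 ≤ Wsum w * M := mul_nonneg (Wsum_nonneg w) hM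
  rcases Nat.eq_zero_or_pos m with rfl | hm
  · simpa [mul_assoc] using mul_nonneg (sub_nonneg.mpr hab) hWM
  calc |(b - a) / m * ∑ j ∈ Finset.range m, ∑ i, w i * g j i|
      = (b - a) / m * |∑ j ∈ Finset.range m, ∑ i, w i * g j i| := by
        rw [abs_mul, abs_of_nonneg (div_nonneg (sub_nonneg.mpr hab) m.cast_nonneg)]
    _ ≤ (b - a) / m * ∑ _j ∈ Finset.range m, Wsum w * M := by
        gcongr
        exact (Finset.abs_sum_le_sum_abs _ _).trans (Finset.sum_le_sum hinner)
    _ = (b - a) * Wsum w * M := by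
        rw [Finset.sum_const, Finset.card_range, nsmul_eq_mul]
        field_simp

end Quadrature

section Nystrom

variable {ρ : ℕ} {a b : ℝ} {w μ : Fin ρ → ℝ} {m : ℕ} {κ : ℝ → ℝ → ℝ → ℝ}

lemma contDiff_du_slice {k : ℕ} (hκu : ContDiff ℝ k fun v : ℝ × ℝ × ℝ => du κ v.1 v.2.1 v.2.2)
    (t u : ℝ) : ContDiff ℝ k fun s => du κ s t u :=
  hκu.comp (contDiff_id.prodMk (contDiff_const (c := (t, u))))

lemma contDiff_nystU' {k : ℕ} (hκu : ContDiff ℝ k fun v : ℝ × ℝ × ℝ => du κ v.1 v.2.1 v.2.2)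
    (x v : ℝ → ℝ) : ContDiff ℝ k (nystU' a b w μ m κ x v) :=
  contDiff_const.mul <| ContDiff.sum fun _ _ => ContDiff.sum fun _ _ =>
    (contDiff_const.mul (contDiff_du_slice hκu _ _)).mul contDiff_const

lemma iteratedDeriv_nystU' {k : ℕ}
    (hκu : ContDiff ℝ k fun v : ℝ × ℝ × ℝ => du κ v.1 v.2.1 v.2.2) (x v : ℝ → ℝ) (s : ℝ) :
    iteratedDeriv k (nystU' a b w μ m κ x v) s =
      (b - a) / m * ∑ j ∈ Finset.range m, ∑ i, w i *
        (iteratedDeriv k (fun s' => du κ s' (qNode a b μ m j i) (x (qNode a b μ m j i))) s *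
          v (qNode a b μ m j i)) := by
  have hterm : ∀ (c t u d : ℝ), ContDiff ℝ k fun s' => c * du κ s' t u * d := fun c t u d =>
    (contDiff_const.mul (contDiff_du_slice hκu t u)).mul contDiff_const
  unfold nystU'
  simp only [du] at hterm ⊢
  rw [iteratedDeriv_const_mul_field,
    iteratedDeriv_fun_sum fun j _ => (ContDiff.sum fun i _ => hterm _ _ _ _).contDiffAt]
  congr 1
  refine Finset.sum_congr rfl fun j _ => ?_
  rw [iteratedDeriv_fun_sum fun i _ => (hterm _ _ _ _).contDiffAt]
  refine Finset.sum_congr rfl fun i _ => ?_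
  rw [iteratedDeriv_mul_const_field, iteratedDeriv_const_mul_field, mul_assoc]

lemma abs_iteratedDeriv_nystU'_le (hab : a ≤ b) (hμ : ∀ i, μ i ∈ Icc (0 : ℝ) 1) {k : ℕ}
    (hκu : ContDiff ℝ k fun v : ℝ × ℝ × ℝ => du κ v.1 v.2.1 v.2.2) {x v : ℝ → ℝ} {B V M : ℝ}
    (hx : ∀ t ∈ Icc a b, |x t| ≤ B) (hv : ∀ t ∈ Icc a b, |v t| ≤ V) (hV : 0 ≤ V) (hM : 0 ≤ M)
    (hκM : ∀ z ∈ Icc a b ×ˢ Icc a b ×ˢ Icc (-B) B,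
      |iteratedDeriv k (fun s => du κ s z.2.1 z.2.2) z.1| ≤ M)
    {s : ℝ} (hs : s ∈ Icc a b) :
    |iteratedDeriv k (nystU' a b w μ m κ x v) s| ≤ (b - a) * Wsum w * (M * V) := by
  rw [iteratedDeriv_nystU' hκu]
  refine abs_composite_sum_le hab w m _ (mul_nonneg hM hV) fun j hj i => ?_
  have hζ := qNode_mem_Icc hab hμ hj i
  rw [abs_mul]
  exact mul_le_mul (hκM (s, _, _) ⟨hs, hζ, abs_le.mp (hx _ hζ)⟩) (hv _ hζ) (abs_nonneg _) hM

end Nystrom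

section Interpolation

variable {r : ℕ} {a b : ℝ} {q : Fin r → ℝ} {n : ℕ}

lemma iIdx_cell (hab : a < b) (hn : 0 < n) {t : ℝ} (ht : t ∈ Icc a b) :
    a ≤ a + iIdx a b n t * ((b - a) / n) ∧
      a + iIdx a b n t * ((b - a) / n) + (b - a) / n ≤ b ∧
      t ∈ Icc (a + iIdx a b n t * ((b - a) / n))
        (a + iIdx a b n t * ((b - a) / n) + (b - a) / n) := by
  have hn' : (0 : ℝ) < n := by exact_mod_cast hn
  set h := (b - a) / n
  have hh : 0 < h := div_pos (sub_pos.mpr hab) hn'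
  have hnh : (n : ℝ) * h = b - a := mul_div_cancel₀ _ hn'.ne'
  set z := (t - a) / h with hz_def
  have hz : t = a + z * h := by rw [hz_def, div_mul_cancel₀ _ hh.ne']; ring
  have hz0 : 0 ≤ z := div_nonneg (sub_nonneg.mpr ht.1) hh.le
  have hzn : z ≤ n := by rw [hz_def, div_le_iff₀ hh]; linarith [ht.2]
  have hk : iIdx a b n t = min (n - 1) ⌊z⌋₊ := by rw [iIdx, Int.floor_toNat]
  set k := iIdx a b n t
  have hkz : (k : ℝ) ≤ z := by
    rw [hk]; exact (Nat.cast_le.mpr (min_le_right _ _)).trans (Nat.floor_le hz0)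
  have hkn : (k : ℝ) + 1 ≤ n := by
    have : k + 1 ≤ n := by omega
    exact_mod_cast this
  have hzk : z ≤ k + 1 := by
    rcases min_choice (n - 1) ⌊z⌋₊ with hmin | hmin
    · rw [hk, hmin, Nat.cast_sub hn]; push_cast; linarith
    · rw [hk, hmin]; exact (Nat.lt_floor_add_one z).le
  refine ⟨?_, ?_, ?_, ?_⟩ <;> nlinarith

lemma abs_eval_basis_le (hq : Function.Injective q) (hq01 : ∀ i, q i ∈ Icc (0 : ℝ) 1)
    {c h t : ℝ} (hh : 0 < h) (ht : t ∈ Icc c (c + h)) (i : Fin r) :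
    |(Lagrange.basis Finset.univ (fun j => c + q j * h) i).eval t| ≤
      ∏ j ∈ Finset.univ.erase i, |q i - q j|⁻¹ := by
  rw [Lagrange.basis, Polynomial.eval_prod, Finset.abs_prod]
  refine Finset.prod_le_prod (fun _ _ => abs_nonneg _) fun j hj => ?_
  have hqij : 0 < |q i - q j| :=
    abs_pos.mpr (sub_ne_zero.mpr (hq.ne (Finset.ne_of_mem_erase hj).symm))
  have hqh0 : 0 ≤ q j * h := mul_nonneg (hq01 j).1 hh.le
  have hqh1 : q j * h ≤ h := mul_le_of_le_one_left hh.le (hq01 j).2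
  have hnum : |t - (c + q j * h)| ≤ h :=
    abs_le.mpr ⟨by linarith [ht.1], by linarith [ht.2]⟩
  simp only [Lagrange.basisDivisor, Polynomial.eval_mul, Polynomial.eval_C,
    Polynomial.eval_sub, Polynomial.eval_X]
  rw [show c + q i * h - (c + q j * h) = (q i - q j) * h by ring, abs_mul, abs_inv, abs_mul,
    abs_of_pos hh, mul_inv, mul_assoc]
  calc |q i - q j|⁻¹ * (h⁻¹ * |t - (c + q j * h)|)
      ≤ |q i - q j|⁻¹ * (h⁻¹ * h) := by gcongr
    _ = |q i - q j|⁻¹ := by rw [inv_mul_cancel₀ hh.ne', mul_one]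

/-- A mesh-independent bound for the Lebesgue constant of `projQ`. -/
def lebesgueBound (q : Fin r → ℝ) : ℝ := ∑ i, ∏ j ∈ Finset.univ.erase i, |q i - q j|⁻¹

lemma lebesgueBound_nonneg (q : Fin r → ℝ) : 0 ≤ lebesgueBound q :=
  Finset.sum_nonneg fun _ _ => Finset.prod_nonneg fun _ _ => by positivity

lemma projQ_apply_eq_sum (x : ℝ → ℝ) (t : ℝ) :
    projQ a b q n x t = ∑ i, x (cNode a b q n (iIdx a b n t) i) *
      (Lagrange.basis Finset.univ (cNode a b q n (iIdx a b n t)) i).eval t := by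
  simp only [projQ, Lagrange.interpolate_apply, Polynomial.eval_finsetSum,
    Polynomial.eval_mul, Polynomial.eval_C]

lemma projQ_sub (x y : ℝ → ℝ) (t : ℝ) :
    projQ a b q n (x - y) t = projQ a b q n x t - projQ a b q n y t := by
  simp only [projQ_apply_eq_sum, Pi.sub_apply, sub_mul, Finset.sum_sub_distrib]

lemma projQ_polynomial (hab : a < b) (hn : 0 < n) (hq : Function.Injective q)
    {P : Polynomial ℝ} (hP : P.degree < r) (t : ℝ) :
    projQ a b q n (fun s => P.eval s) t = P.eval t := by
  have hh : (b - a) / n ≠ 0 := div_ne_zero (sub_pos.mpr hab).ne' (Nat.cast_pos.mpr hn).ne'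
  have hinj : Set.InjOn (cNode a b q n (iIdx a b n t)) (Finset.univ : Finset (Fin r)) :=
    fun i _ j _ hij => hq (mul_right_cancel₀ hh (add_left_cancel hij))
  rw [projQ, ← Lagrange.eq_interpolate hinj (by rwa [Finset.card_univ, Fintype.card_fin])]

lemma cNode_mem_cell (hab : a < b) (hn : 0 < n) (hq01 : ∀ i, q i ∈ Icc (0 : ℝ) 1)
    (k : ℕ) (i : Fin r) :
    cNode a b q n k i ∈ Icc (a + k * ((b - a) / n)) (a + k * ((b - a) / n) + (b - a) / n) := by
  have hh : 0 < (b - a) / n := div_pos (sub_pos.mpr hab) (Nat.cast_pos.mpr hn)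
  obtain ⟨hq0, hq1⟩ := hq01 i
  constructor <;> simp only [cNode] <;> nlinarith

lemma abs_projQ_le_of_nodes (hab : a < b) (hn : 0 < n) (hq : Function.Injective q)
    (hq01 : ∀ i, q i ∈ Icc (0 : ℝ) 1) {x : ℝ → ℝ} {V t : ℝ} (ht : t ∈ Icc a b)
    (hx : ∀ i, |x (cNode a b q n (iIdx a b n t) i)| ≤ V) :
    |projQ a b q n x t| ≤ lebesgueBound q * V := by
  have hh : 0 < (b - a) / n := div_pos (sub_pos.mpr hab) (Nat.cast_pos.mpr hn)
  rw [projQ_apply_eq_sum, lebesgueBound, Finset.sum_mul]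
  refine (Finset.abs_sum_le_sum_abs _ _).trans (Finset.sum_le_sum fun i _ => ?_)
  rw [abs_mul, mul_comm]
  exact mul_le_mul (abs_eval_basis_le hq hq01 hh (iIdx_cell hab hn ht).2.2 i) (hx i)
    (abs_nonneg _) (Finset.prod_nonneg fun _ _ => by positivity)

lemma abs_projQ_le (hab : a < b) (hn : 0 < n) (hq : Function.Injective q)
    (hq01 : ∀ i, q i ∈ Icc (0 : ℝ) 1) {x : ℝ → ℝ} {V t : ℝ}
    (hx : ∀ s ∈ Icc a b, |x s| ≤ V) (ht : t ∈ Icc a b) :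
    |projQ a b q n x t| ≤ lebesgueBound q * V := by
  obtain ⟨hca, hcb, -⟩ := iIdx_cell hab hn ht
  refine abs_projQ_le_of_nodes hab hn hq hq01 ht fun i => hx _ ?_
  have := cNode_mem_cell hab hn hq01 (iIdx a b n t) i
  exact ⟨hca.trans this.1, this.2.trans hcb⟩

lemma exists_polynomial_approx (hr : 0 < r) {y : ℝ → ℝ} (hy : ContDiff ℝ r y) {c h M : ℝ}
    (hh : 0 < h) (hM : ∀ s ∈ Icc c (c + h), |iteratedDeriv r y s| ≤ M) :
    ∃ P : Polynomial ℝ, P.degree < r ∧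
      ∀ s ∈ Icc c (c + h), |y s - P.eval s| ≤ M * h ^ r / (r - 1).factorial := by
  obtain ⟨r, rfl⟩ : ∃ r', r = r' + 1 := ⟨r - 1, by omega⟩
  set I := Icc c (c + h)
  let P : Polynomial ℝ := ∑ k ∈ Finset.range (r + 1),
    Polynomial.C ((k.factorial : ℝ)⁻¹ * iteratedDerivWithin k y I c) *
      (Polynomial.X - Polynomial.C c) ^ k
  have hdeg : P.natDegree ≤ r := Polynomial.natDegree_sum_le_of_forall_le _ _ fun k hk =>
    (Polynomial.natDegree_C_mul_le _ _).trans <| (Polynomial.natDegree_pow_le).trans <| by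
      rw [Polynomial.natDegree_X_sub_C, mul_one]; exact Finset.mem_range_succ_iff.mp hk
  have hM0 : 0 ≤ M := (abs_nonneg _).trans (hM c (left_mem_Icc.mpr (by linarith)))
  refine ⟨P, (Polynomial.degree_le_of_natDegree_le hdeg).trans_lt
    (by exact_mod_cast r.lt_succ_self), fun s hs => ?_⟩
  have hPs : P.eval s = taylorWithinEval y r I c s := by
    simp only [P, taylor_within_apply, Polynomial.eval_finsetSum, Polynomial.eval_mul,
      Polynomial.eval_C, Polynomial.eval_pow, Polynomial.eval_sub, Polynomial.eval_X, smul_eq_mul]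
    exact Finset.sum_congr rfl fun k _ => by ring
  have hbound := taylor_mean_remainder_bound (by linarith) hy.contDiffOn hs fun z hz => by
    rw [iteratedDerivWithin_eq_iteratedDeriv (uniqueDiffOn_Icc (by linarith)) hy.contDiffAt hz,
      Real.norm_eq_abs]
    exact hM z hz
  rw [Real.norm_eq_abs, ← hPs] at hbound
  refine hbound.trans ?_
  rw [Nat.add_sub_cancel]
  gcongr <;> linarith [hs.1, hs.2]

lemma abs_projQ_sub_le (hr : 0 < r) (hab : a < b) (hn : 0 < n) (hq : Function.Injective q)
    (hq01 : ∀ i, q i ∈ Icc (0 : ℝ) 1) {y : ℝ → ℝ} (hy : ContDiff ℝ r y) {M : ℝ}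
    (hM : ∀ s ∈ Icc a b, |iteratedDeriv r y s| ≤ M) {t : ℝ} (ht : t ∈ Icc a b) :
    |projQ a b q n y t - y t| ≤
      (lebesgueBound q + 1) * (M * ((b - a) / n) ^ r / (r - 1).factorial) := by
  obtain ⟨hca, hcb, htc⟩ := iIdx_cell hab hn ht
  have hh : 0 < (b - a) / n := div_pos (sub_pos.mpr hab) (Nat.cast_pos.mpr hn)
  obtain ⟨P, hP, hyP⟩ := exists_polynomial_approx hr hy hh
    fun s hs => hM s ⟨hca.trans hs.1, hs.2.trans hcb⟩
  have hsplit : projQ a b q n y t - y t =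
      projQ a b q n (y - fun s => P.eval s) t - (y t - P.eval t) := by
    rw [projQ_sub, projQ_polynomial hab hn hq hP]; ring
  rw [hsplit, add_mul, one_mul]
  exact (abs_sub _ _).trans (add_le_add (abs_projQ_le_of_nodes hab hn hq hq01 ht fun i =>
    hyP _ (cNode_mem_cell hab hn hq01 _ i)) (hyP t htc))

end Interpolation

lemma le_supIcc {a b : ℝ} {x : ℝ → ℝ} (hx : BddIcc a b x) {t : ℝ} (ht : t ∈ Icc a b) :
    |x t| ≤ supIcc a b x := by
  obtain ⟨M, hM⟩ := hx
  exact le_ciSup_of_le ⟨M, by rintro _ ⟨u, rfl⟩; exact hM u.1 u.2⟩ (⟨t, ht⟩ : Icc a b) le_rfl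

lemma BddIcc.sub {a b : ℝ} {x y : ℝ → ℝ} (hx : BddIcc a b x) (hy : BddIcc a b y) :
    BddIcc a b (x - y) := by
  obtain ⟨M, hM⟩ := hx
  obtain ⟨N, hN⟩ := hy
  exact ⟨M + N, fun t ht => (abs_sub _ _).trans (add_le_add (hM t ht) (hN t ht))⟩

section ModifiedProjection

variable {ρ r : ℕ} {a b : ℝ} {w μ : Fin ρ → ℝ} {q : Fin r → ℝ} {n m : ℕ}
  {κ : ℝ → ℝ → ℝ → ℝ}

lemma modU'_sub_nystU'_apply (x v : ℝ → ℝ) (t : ℝ) :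
    (modU' a b w μ q n m κ x v - nystU' a b w μ m κ x v) t =
      (projQ a b q n (nystU' a b w μ m κ x v) t - nystU' a b w μ m κ x v t) -
        (projQ a b q n (nystU' a b w μ m κ (projQ a b q n x) (projQ a b q n v)) t -
          nystU' a b w μ m κ (projQ a b q n x) (projQ a b q n v) t) := by
  simp only [modU', Pi.sub_apply, Pi.add_apply]
  ring

lemma abs_modU'_sub_nystU'_le (hr : 0 < r) (hab : a < b) (hμ : ∀ i, μ i ∈ Icc (0 : ℝ) 1)
    (hn : 0 < n) (hq : Function.Injective q) (hq01 : ∀ i, q i ∈ Icc (0 : ℝ) 1)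
    {x v : ℝ → ℝ} {B V : ℝ} (hx : ∀ t ∈ Icc a b, |x t| ≤ B)
    (hQx : ∀ t ∈ Icc a b, |projQ a b q n x t| ≤ B) (hv : ∀ t ∈ Icc a b, |v t| ≤ V) (hV : 0 ≤ V)
    (hκu : ContDiff ℝ r fun v : ℝ × ℝ × ℝ => du κ v.1 v.2.1 v.2.2) {Mr : ℝ} (hMr : 0 ≤ Mr)
    (hκMr : ∀ z ∈ Icc a b ×ˢ Icc a b ×ˢ Icc (-B) B,
      |iteratedDeriv r (fun s => du κ s z.2.1 z.2.2) z.1| ≤ Mr)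
    {t : ℝ} (ht : t ∈ Icc a b) :
    |(modU' a b w μ q n m κ x v - nystU' a b w μ m κ x v) t| ≤
      (lebesgueBound q + 1) ^ 2 *
        ((b - a) * Wsum w * Mr / (r - 1).factorial) * V * ((b - a) / n) ^ r := by
  have hΛ := lebesgueBound_nonneg q
  have hQv : ∀ s ∈ Icc a b, |projQ a b q n v s| ≤ lebesgueBound q * V :=
    fun s hs => abs_projQ_le hab hn hq hq01 hv hs
  have e₁ := abs_projQ_sub_le hr hab hn hq hq01 (contDiff_nystU' (w := w) (m := m) hκu x v)
    (fun s hs => abs_iteratedDeriv_nystU'_le hab.le hμ hκu hx hv hV hMr hκMr hs) ht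
  have e₂ := abs_projQ_sub_le hr hab hn hq hq01 (contDiff_nystU' (w := w) (m := m) hκu _ _)
    (fun s hs => abs_iteratedDeriv_nystU'_le hab.le hμ hκu hQx hQv (mul_nonneg hΛ hV) hMr
      hκMr hs) ht
  rw [modU'_sub_nystU'_apply]
  refine (abs_sub _ _).trans ((add_le_add e₁ e₂).trans_eq ?_)
  ring

lemma abs_nystU'_modU'_sub_nystU'_le (hr : 0 < r) (hab : a < b) (hμ : ∀ i, μ i ∈ Icc (0 : ℝ) 1)
    (hn : 0 < n) (hq : Function.Injective q) (hq01 : ∀ i, q i ∈ Icc (0 : ℝ) 1)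
    {x v : ℝ → ℝ} {B V : ℝ} (hx : ∀ t ∈ Icc a b, |x t| ≤ B)
    (hQx : ∀ t ∈ Icc a b, |projQ a b q n x t| ≤ B) (hv : ∀ t ∈ Icc a b, |v t| ≤ V) (hV : 0 ≤ V)
    (hκu : ContDiff ℝ r fun v : ℝ × ℝ × ℝ => du κ v.1 v.2.1 v.2.2) {M₀ Mr : ℝ} (hM₀ : 0 ≤ M₀)
    (hκM₀ : ∀ z ∈ Icc a b ×ˢ Icc a b ×ˢ Icc (-B) B,
      |iteratedDeriv 0 (fun s => du κ s z.2.1 z.2.2) z.1| ≤ M₀)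
    (hMr : 0 ≤ Mr) (hκMr : ∀ z ∈ Icc a b ×ˢ Icc a b ×ˢ Icc (-B) B,
      |iteratedDeriv r (fun s => du κ s z.2.1 z.2.2) z.1| ≤ Mr)
    {s : ℝ} (hs : s ∈ Icc a b) :
    |nystU' a b w μ m κ x (modU' a b w μ q n m κ x v - nystU' a b w μ m κ x v) s| ≤
      (b - a) * Wsum w * M₀ * ((lebesgueBound q + 1) ^ 2 *
        ((b - a) * Wsum w * Mr / (r - 1).factorial)) * ((b - a) / n) ^ r * V := by
  have hS : 0 ≤ (lebesgueBound q + 1) ^ 2 * ((b - a) * Wsum w * Mr / (r - 1).factorial) * V *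
      ((b - a) / n) ^ r := by
    have := Wsum_nonneg w
    have := sub_pos.mpr hab
    positivity
  have h := abs_iteratedDeriv_nystU'_le (w := w) (m := m) hab.le hμ (hκu.of_le (by simp)) hx
    (fun t ht =>
      abs_modU'_sub_nystU'_le (m := m) hr hab hμ hn hq hq01 hx hQx hv hV hκu hMr hκMr ht)
    hS hM₀ hκM₀ hs
  rw [iteratedDeriv_zero] at h
  exact h.trans_eq (by ring)

end ModifiedProjection

theorem stmt18_general {ρ r : ℕ} (hr : 1 ≤ r) (w μ : Fin ρ → ℝ)
    (hμ : ∀ i, μ i ∈ Set.Ioo (0:ℝ) 1)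
    (q : Fin r → ℝ) (hq : GaussPts q) (a b : ℝ) (hab : a < b)
    (κ : ℝ → ℝ → ℝ → ℝ)
    (hκu : ContDiff ℝ (3 * r : ℕ) fun v : ℝ × ℝ × ℝ => du κ v.1 v.2.1 v.2.2)
    (f : ℝ → ℝ)
    (δ₀ : ℝ) (φ : ℝ → ℝ) (hφ : BddIcc a b φ)
    (c₀ : ℝ) (p : ℕ)
    (d : ℕ) :
    ∃ C : ℝ, ∀ n : ℕ, 1 ≤ n → ∀ φm : ℝ → ℝ,
      (∀ t ∈ Set.Icc a b, |φm t - φ t| ≤ δ₀) →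
      (∀ s, φm s - nystU a b w μ (n * p) κ φm s = f s) →
      (∀ t ∈ Set.Icc a b, |projQ a b q n φm t - φm t| ≤
        min δ₀ (c₀ * ((b - a) / n) ^ r)) →
      (∀ v : ℝ → ℝ, BddIcc a b v →
        ∀ s ∈ Set.Icc a b,
          |nystU' a b w μ (n * p) κ φm
              (modU' a b w μ q n (n * p) κ φm v - nystU' a b w μ (n * p) κ φm v) s| ≤
            C * ((b - a) / n) ^ r * supIcc a b v) ∧
      ∀ (c₁ : ℝ) (z : ℝ → ℝ), BddIcc a b z →
        supIcc a b (z - φm) ≤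
          c₁ * max (((b - a) / ((n : ℝ) * p)) ^ d) (((b - a) / n) ^ (3 * r)) →
        ∀ s ∈ Set.Icc a b,
          |nystU' a b w μ (n * p) κ φm
              (modU' a b w μ q n (n * p) κ φm (z - φm)
                - nystU' a b w μ (n * p) κ φm (z - φm)) s| ≤
            C * c₁ * ((b - a) / n) ^ r *
              max (((b - a) / ((n : ℝ) * p)) ^ d) (((b - a) / n) ^ (3 * r)) := by
  obtain ⟨hq_mono, hq01, -⟩ := hq
  have hq01' : ∀ i, q i ∈ Icc (0 : ℝ) 1 := fun i => Ioo_subset_Icc_self (hq01 i)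
  have hμ' : ∀ i, μ i ∈ Icc (0 : ℝ) 1 := fun i => Ioo_subset_Icc_self (hμ i)
  obtain ⟨Bφ, hBφ⟩ := hφ
  have hK : IsCompact (Icc a b ×ˢ Icc a b ×ˢ Icc (-(Bφ + 2 * δ₀)) (Bφ + 2 * δ₀)) :=
    isCompact_Icc.prod (isCompact_Icc.prod isCompact_Icc)
  have hκr : ContDiff ℝ r fun v : ℝ × ℝ × ℝ => du κ v.1 v.2.1 v.2.2 :=
    hκu.of_le (by exact_mod_cast (by omega : r ≤ 3 * r))
  obtain ⟨M₀, hM₀, hκM₀⟩ := exists_bound_iteratedDeriv_slice (k := 0) (hκr.of_le (by simp)) hK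
  obtain ⟨Mr, hMr, hκMr⟩ := exists_bound_iteratedDeriv_slice hκr hK
  set C := (b - a) * Wsum w * M₀ *
    ((lebesgueBound q + 1) ^ 2 * ((b - a) * Wsum w * Mr / (r - 1).factorial))
  refine ⟨C, fun n hn φm hφm _ hQφm => ?_⟩
  have hφmB : ∀ t ∈ Icc a b, |φm t| ≤ Bφ + 2 * δ₀ := fun t ht => by
    linarith [abs_sub_abs_le_abs_sub (φm t) (φ t), hφm t ht, hBφ t ht, abs_nonneg (φm t - φ t)]
  have hQφmB : ∀ t ∈ Icc a b, |projQ a b q n φm t| ≤ Bφ + 2 * δ₀ := fun t ht => by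
    linarith [abs_sub_abs_le_abs_sub (projQ a b q n φm t) (φm t), hφmB t ht,
      (hQφm t ht).trans (min_le_left _ _), abs_sub_abs_le_abs_sub (φm t) (φ t), hφm t ht, hBφ t ht]
  have hmain := fun v (hv : BddIcc a b v) s (hs : s ∈ Icc a b) =>
    abs_nystU'_modU'_sub_nystU'_le (w := w) (m := n * p) hr hab hμ' hn hq_mono.injective hq01'
      hφmB hQφmB (fun t ht => le_supIcc hv ht) ((abs_nonneg _).trans (le_supIcc hv hs)) hκr
      hM₀ hκM₀ hMr hκMr hs
  have hC : 0 ≤ C * ((b - a) / n) ^ r := by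
    have := Wsum_nonneg w
    have := lebesgueBound_nonneg q
    have := sub_pos.mpr hab
    positivity
  refine ⟨hmain, fun c₁ z hz hzφ s hs => ?_⟩
  calc _ ≤ C * ((b - a) / n) ^ r * supIcc a b (z - φm) := hmain _ (hz.sub ⟨_, hφmB⟩) s hs
    _ ≤ C * ((b - a) / n) ^ r *
          (c₁ * max (((b - a) / ((n : ℝ) * p)) ^ d) (((b - a) / n) ^ (3 * r))) := by gcongr
    _ = _ := by ring

/-- Proposition 5.7. -/
theorem stmt18 {ρ r : ℕ} (hr : 1 ≤ r) (w μ : Fin ρ → ℝ)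
    (hμ : ∀ i, μ i ∈ Set.Ioo (0:ℝ) 1) (hprec : Precision w μ (2 * r - 1))
    (q : Fin r → ℝ) (hq : GaussPts q) (a b : ℝ) (hab : a < b)
    (κ : ℝ → ℝ → ℝ → ℝ)
    (hκ : ContDiff ℝ (3 * r : ℕ) fun v : ℝ × ℝ × ℝ => κ v.1 v.2.1 v.2.2)
    (hκu : ContDiff ℝ (3 * r : ℕ) fun v : ℝ × ℝ × ℝ => du κ v.1 v.2.1 v.2.2)
    (h2 : Smooth2 κ)
    (f : ℝ → ℝ) (hf : ContDiff ℝ (3 * r : ℕ) f)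
    (δ₀ : ℝ) (hδ₀ : 0 < δ₀) (φ : ℝ → ℝ) (hφ : BddIcc a b φ)
    (c₀ : ℝ) (hc₀ : 0 < c₀) (p : ℕ) (hp : 1 ≤ p)
    (d : ℕ) (hd : 2 * r ≤ d) :
    ∃ C : ℝ, ∀ n : ℕ, 1 ≤ n → ∀ φm : ℝ → ℝ,
      (∀ t ∈ Set.Icc a b, |φm t - φ t| ≤ δ₀) →
      (∀ s, φm s - nystU a b w μ (n * p) κ φm s = f s) →
      (∀ t ∈ Set.Icc a b, |projQ a b q n φm t - φm t| ≤
        min δ₀ (c₀ * ((b - a) / n) ^ r)) →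
      (∀ v : ℝ → ℝ, BddIcc a b v →
        ∀ s ∈ Set.Icc a b,
          |nystU' a b w μ (n * p) κ φm
              (modU' a b w μ q n (n * p) κ φm v - nystU' a b w μ (n * p) κ φm v) s| ≤
            C * ((b - a) / n) ^ r * supIcc a b v) ∧
      ∀ (c₁ : ℝ) (z : ℝ → ℝ), BddIcc a b z →
        supIcc a b (z - φm) ≤
          c₁ * max (((b - a) / ((n : ℝ) * p)) ^ d) (((b - a) / n) ^ (3 * r)) →
        ∀ s ∈ Set.Icc a b,
          |nystU' a b w μ (n * p) κ φm
              (modU' a b w μ q n (n * p) κ φm (z - φm)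
                - nystU' a b w μ (n * p) κ φm (z - φm)) s| ≤
            C * c₁ * ((b - a) / n) ^ r *
              max (((b - a) / ((n : ℝ) * p)) ^ d) (((b - a) / n) ^ (3 * r)) :=
  stmt18_general hr w μ hμ q hq a b hab κ hκu f δ₀ φ hφ c₀ p d

end
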